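/- arXiv:1011.0268 — 2 statements merged into one kernel-verified Lean document; each statement's English description precedes it below -/
import Mathlib

section
/- Let φ be a satisfiable 3CNF formula with clauses C₁,…,C_m over variables var₁,…,var_n, and let A be a satisfying truth assignment. Define the positional distributed strategy ξ=⟨f₁,f₂,f₃,f₄⟩ on 𝒢(φ) by: for i=1,2,3, fᵢ(var_j)=T_{var_j} if A(var_j)=true and fᵢ(var_j)=F_{var_j} if A(var_j)=false; and f₄ maps v_{j,0}↦v_{j,1}, OK₀↦OK₁, NO₀↦NO₁. Then ξ is reachability-winning from (S,S,S,S) to (var₁,var₁,var₁,OK₀). -/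
namespace DGame

/-- A literal: a variable index together with a sign (`true` = positive literal). -/
abbrev Lit (n : ℕ) := Fin n × Bool

/-- A 3CNF clause: three literals. -/
abbrev Clause (n : ℕ) := Lit n × Lit n × Lit n

/-- A 3CNF formula `φ` with `m` clauses `C₁,…,C_m` over `n` variables `var₁,…,var_n`. -/
abbrev CNF (m n : ℕ) := Fin m → Clause n

/-- Evaluation of a clause under a truth assignment. -/
def Clause.eval {n : ℕ} (A : Fin n → Bool) (c : Clause n) : Bool :=
  (A c.1.1 == c.1.2) || (A c.2.1.1 == c.2.1.2) || (A c.2.2.1 == c.2.2.2)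

/-- `A` is a satisfying truth assignment for `φ`. -/
def CNF.Sat {m n : ℕ} (φ : CNF m n) (A : Fin n → Bool) : Prop :=
  ∀ i, Clause.eval A (φ i) = true

/-- Truth of clause `c` under an assignment `(a₁,a₂,a₃) ∈ {T,F}³` of its three
(literal positions') variables. -/
def Clause.evalTriple {n : ℕ} (c : Clause n) (a : Bool × Bool × Bool) : Bool :=
  (a.1 == c.1.2) || (a.2.1 == c.2.1.2) || (a.2.2 == c.2.2.2)

/-- Vertices of the local games `G₁, G₂, G₃`:
player-0 vertices `var j`, player-1 vertices `S`, `T j`, `F j`. -/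
inductive LV (n : ℕ) : Type
  | var (j : Fin n)
  | S
  | T (j : Fin n)
  | F (j : Fin n)
  deriving DecidableEq, Fintype

/-- Player-0 vertices of `G₁, G₂, G₃`. -/
def LV.IsP0 {n : ℕ} : LV n → Prop
  | .var _ => True
  | _ => False

/-- Local edges of `G₁, G₂, G₃`: `(var j, T j)` and `(var j, F j)`. -/
inductive LE {n : ℕ} : LV n → LV n → Prop
  | toT (j : Fin n) : LE (.var j) (.T j)
  | toF (j : Fin n) : LE (.var j) (.F j)

/-- Vertices of the local game `G₄`:
player-0 vertices `OK₀, NO₀, v_{j,0}`, player-1 vertices `S, OK₁, NO₁, v_{j,1}`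
(for `j = 1..m+n`). -/
inductive LV4 (m n : ℕ) : Type
  | OK0
  | NO0
  | v0 (j : Fin (m + n))
  | S
  | OK1
  | NO1
  | v1 (j : Fin (m + n))
  deriving DecidableEq, Fintype

/-- Player-0 vertices of `G₄`. -/
def LV4.IsP0 {m n : ℕ} : LV4 m n → Prop
  | .OK0 => True
  | .NO0 => True
  | .v0 _ => True
  | _ => False

/-- Local edges of `G₄`: `(v_{j,0}, v_{j,1})`, `(OK₀, OK₁)`, `(NO₀, NO₁)`. -/
inductive LE4 {m n : ℕ} : LV4 m n → LV4 m n → Prop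
  | mid (j : Fin (m + n)) : LE4 (.v0 j) (.v1 j)
  | ok : LE4 .OK0 .OK1
  | no : LE4 .NO0 .NO1

/-- Global vertices of the distributed game `𝒢(φ)`. -/
abbrev GV (m n : ℕ) := LV n × LV n × LV n × LV4 m n

/-- `𝒱₁`: global player-1 vertices (all components are local player-1 vertices).
All other global vertices form `𝒱₀`. -/
def GV.IsP1 {m n : ℕ} (x : GV m n) : Prop :=
  ¬ x.1.IsP0 ∧ ¬ x.2.1.IsP0 ∧ ¬ x.2.2.1.IsP0 ∧ ¬ x.2.2.2.IsP0

/-- The vertex `T j` or `F j` of `G₁,G₂,G₃` according to a boolean. -/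
def tf {n : ℕ} (a : Bool) (j : Fin n) : LV n := if a then .T j else .F j

/-- The initial state `(S,S,S,S)`. -/
def start (m n : ℕ) : GV m n := (.S, .S, .S, .S)

/-- The target state `(var₁, var₁, var₁, OK₀)`. -/
def tgt (m n : ℕ) [NeZero n] : GV m n := (.var 0, .var 0, .var 0, .OK0)

/-- The losing state `(var₁, var₁, var₁, NO₀)`. -/
def sink (m n : ℕ) [NeZero n] : GV m n := (.var 0, .var 0, .var 0, .NO0)

/-- The prescribed player-1 edges of the reduction game `𝒢(φ)` (types 1–5).
For the clause `Cᵢ`, the index of `v_i` in `G₄` is `i.castAdd n`; for the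
variable `var_j` the index of `v_{m+j}` is `Fin.natAdd m j`. -/
inductive E1 {m n : ℕ} [NeZero n] (φ : CNF m n) : GV m n → GV m n → Prop
  /-- (type 1) intention to check satisfaction of clause `Cᵢ`. -/
  | type1 (i : Fin m) :
      E1 φ (start m n)
        (.var (φ i).1.1, .var (φ i).2.1.1, .var (φ i).2.2.1, .v0 (i.castAdd n))
  /-- (type 2) intention to check consistency of variable `var_j`. -/
  | type2 (j : Fin n) :
      E1 φ (start m n) (.var j, .var j, .var j, .v0 (Fin.natAdd m j))
  /-- (type 3a) an assignment making clause `Cᵢ` true leads to the target. -/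
  | type3a (i : Fin m) (a : Bool × Bool × Bool)
      (h : Clause.evalTriple (φ i) a = true) :
      E1 φ (tf a.1 (φ i).1.1, tf a.2.1 (φ i).2.1.1, tf a.2.2 (φ i).2.2.1,
            .v1 (i.castAdd n)) (tgt m n)
  /-- (type 3b) an assignment making clause `Cᵢ` false leads to `NO₀`. -/
  | type3b (i : Fin m) (a : Bool × Bool × Bool)
      (h : Clause.evalTriple (φ i) a = false) :
      E1 φ (tf a.1 (φ i).1.1, tf a.2.1 (φ i).2.1.1, tf a.2.2 (φ i).2.2.1,
            .v1 (i.castAdd n)) (sink m n)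
  /-- (type 4a) consistent choices `(T,T,T)` or `(F,F,F)` lead to the target. -/
  | type4a (j : Fin n) (a : Bool) :
      E1 φ (tf a j, tf a j, tf a j, .v1 (Fin.natAdd m j)) (tgt m n)
  /-- (type 4b) the six mixed combinations lead to `NO₀`. -/
  | type4b (j : Fin n) (a : Bool × Bool × Bool)
      (h : ¬ (a.1 = a.2.1 ∧ a.2.1 = a.2.2)) :
      E1 φ (tf a.1 j, tf a.2.1 j, tf a.2.2 j, .v1 (Fin.natAdd m j)) (sink m n)
  /-- (type 5) continuous execution, `OK₁` side. -/
  | type5ok (j : Fin n) (a : Bool × Bool × Bool) :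
      E1 φ (tf a.1 j, tf a.2.1 j, tf a.2.2 j, .OK1) (tgt m n)
  /-- (type 5) continuous execution, `NO₁` side. -/
  | type5no (j : Fin n) (a : Bool × Bool × Bool) :
      E1 φ (tf a.1 j, tf a.2.1 j, tf a.2.2 j, .NO1) (sink m n)

/-- One-component step for player 0 in `G₁,G₂,G₃`: a player-0 component moves
along a local edge, a player-1 component stays put. -/
def lstep {n : ℕ} : LV n → LV n → Prop
  | .var j, v' => LE (.var j) v'
  | v, v' => v' = v

/-- One-component step for player 0 in `G₄`. -/
def lstep4 {m n : ℕ} : LV4 m n → LV4 m n → Prop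
  | .OK0, v' => LE4 .OK0 v'
  | .NO0, v' => LE4 .NO0 v'
  | .v0 j, v' => LE4 (.v0 j) v'
  | v, v' => v' = v

/-- The global edge relation `ℰ` of `𝒢(φ)`: from a player-1 vertex the
prescribed edges, from a player-0 vertex the componentwise moves. -/
def GE {m n : ℕ} [NeZero n] (φ : CNF m n) (x y : GV m n) : Prop :=
  (x.IsP1 ∧ E1 φ x y) ∨
  (¬ x.IsP1 ∧ lstep x.1 y.1 ∧ lstep x.2.1 y.2.1 ∧ lstep x.2.2.1 y.2.2.1 ∧
    lstep4 x.2.2.2 y.2.2.2)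

/-- A positional distributed strategy `ξ = ⟨f₁,f₂,f₃,f₄⟩` for player 0:
each `fᵢ` maps player-0 local vertices along local edges. -/
structure Strat (m n : ℕ) where
  f1 : LV n → LV n
  f2 : LV n → LV n
  f3 : LV n → LV n
  f4 : LV4 m n → LV4 m n
  h1 : ∀ j : Fin n, LE (.var j) (f1 (.var j))
  h2 : ∀ j : Fin n, LE (.var j) (f2 (.var j))
  h3 : ∀ j : Fin n, LE (.var j) (f3 (.var j))
  h4 : ∀ v : LV4 m n, v.IsP0 → LE4 v (f4 v)

/-- `x` has a successor in `𝒢(φ)`. -/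
def HasSucc {m n : ℕ} [NeZero n] (φ : CNF m n) (x : GV m n) : Prop :=
  ∃ y, GE φ x y

/-- A (maximal) play of `𝒢(φ)`, encoded as an infinite sequence which follows
edges of the game and stutters forever once a dead-end vertex is reached. -/
def IsPlay {m n : ℕ} [NeZero n] (φ : CNF m n) (π : ℕ → GV m n) : Prop :=
  ∀ k, (HasSucc φ (π k) → GE φ (π k) (π (k + 1))) ∧
       (¬ HasSucc φ (π k) → π (k + 1) = π k)

/-- The play `π` is consistent with the positional distributed strategy `ξ`:
at every player-0 vertex, every component in a local player-0 position moves
as prescribed by the corresponding local strategy. -/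
def Consistent {m n : ℕ} (ξ : Strat m n) (π : ℕ → GV m n) : Prop :=
  ∀ k, ¬ (π k).IsP1 →
    ((π k).1.IsP0 → (π (k + 1)).1 = ξ.f1 (π k).1) ∧
    ((π k).2.1.IsP0 → (π (k + 1)).2.1 = ξ.f2 (π k).2.1) ∧
    ((π k).2.2.1.IsP0 → (π (k + 1)).2.2.1 = ξ.f3 (π k).2.2.1) ∧
    ((π k).2.2.2.IsP0 → (π (k + 1)).2.2.2 = ξ.f4 (π k).2.2.2)

/-- `ξ` is reachability-winning from `init` to `goal`: every play starting at
`init` and consistent with `ξ` visits `goal`. -/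
def Winning {m n : ℕ} [NeZero n] (φ : CNF m n) (ξ : Strat m n)
    (init goal : GV m n) : Prop :=
  ∀ π : ℕ → GV m n, IsPlay φ π → Consistent ξ π → π 0 = init → ∃ k, π k = goal


lemma tf_ne_S {n : ℕ} (a : Bool) (j : Fin n) : tf a j ≠ LV.S := by
  cases a <;> simp [tf]

lemma tf_not_P0 {n : ℕ} (a : Bool) (j : Fin n) : ¬ (tf a j).IsP0 := by
  cases a <;> simp [tf, LV.IsP0]

lemma tf_inj {n : ℕ} {a a' : Bool} {j j' : Fin n} (h : tf a j = tf a' j') :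
    a = a' := by
  cases a <;> cases a' <;> simp_all [tf]

lemma castAdd_ne_natAdd {m n : ℕ} (i : Fin m) (j : Fin n) :
    Fin.castAdd n i ≠ Fin.natAdd m j := by
  intro h
  have hv := congrArg Fin.val h
  have hi := i.isLt
  simp at hv
  omega

lemma e1_start_inv {m n : ℕ} [NeZero n] {φ : CNF m n} {y : GV m n}
    (h : E1 φ (start m n) y) :
    (∃ i : Fin m,
       y = (.var (φ i).1.1, .var (φ i).2.1.1, .var (φ i).2.2.1,
            .v0 (Fin.castAdd n i))) ∨
    (∃ j : Fin n, y = (.var j, .var j, .var j, .v0 (Fin.natAdd m j))) := by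
  generalize hx : start m n = x at h
  cases h with
  | type1 i => exact Or.inl ⟨i, rfl⟩
  | type2 j => exact Or.inr ⟨j, rfl⟩
  | type3a i a ht => exact (tf_ne_S _ _ (congrArg Prod.fst hx).symm).elim
  | type3b i a ht => exact (tf_ne_S _ _ (congrArg Prod.fst hx).symm).elim
  | type4a j a => exact (tf_ne_S _ _ (congrArg Prod.fst hx).symm).elim
  | type4b j a hm => exact (tf_ne_S _ _ (congrArg Prod.fst hx).symm).elim
  | type5ok j a => exact (tf_ne_S _ _ (congrArg Prod.fst hx).symm).elim
  | type5no j a => exact (tf_ne_S _ _ (congrArg Prod.fst hx).symm).elim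

lemma e1_clause_inv {m n : ℕ} [NeZero n] {φ : CNF m n} {y : GV m n}
    {a : Bool × Bool × Bool} {i : Fin m}
    (h : E1 φ (tf a.1 (φ i).1.1, tf a.2.1 (φ i).2.1.1, tf a.2.2 (φ i).2.2.1,
          LV4.v1 (Fin.castAdd n i)) y)
    (ht : Clause.evalTriple (φ i) a = true) : y = tgt m n := by
  generalize hx : (tf a.1 (φ i).1.1, tf a.2.1 (φ i).2.1.1,
      tf a.2.2 (φ i).2.2.1,
      (LV4.v1 (Fin.castAdd n i) : LV4 m n)) = x at h
  cases h with
  | type1 i' => exact (tf_ne_S _ _ (congrArg Prod.fst hx)).elim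
  | type2 j => exact (tf_ne_S _ _ (congrArg Prod.fst hx)).elim
  | type3a i' a' ht' => rfl
  | type3b i' a' ht' =>
      have h4 := congrArg (fun p : GV m n => p.2.2.2) hx
      simp only [] at h4
      have hii : i = i' := by
        have := congrArg Fin.val (LV4.v1.inj h4)
        simp at this
        exact Fin.ext this
      subst hii
      have e1 := tf_inj (congrArg (fun p : GV m n => p.1) hx)
      have e2 := tf_inj (congrArg (fun p : GV m n => p.2.1) hx)
      have e3 := tf_inj (congrArg (fun p : GV m n => p.2.2.1) hx)
      have ha : a = a' := by
        obtain ⟨a1, a2, a3⟩ := a; obtain ⟨b1, b2, b3⟩ := a'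
        simp_all
      rw [ha] at ht
      rw [ht] at ht'
      exact absurd ht' (by simp)
  | type4a j b =>
      have h4 := congrArg (fun p : GV m n => p.2.2.2) hx
      simp only [] at h4
      exact (castAdd_ne_natAdd i j (LV4.v1.inj h4)).elim
  | type4b j a' hm =>
      have h4 := congrArg (fun p : GV m n => p.2.2.2) hx
      simp only [] at h4
      exact (castAdd_ne_natAdd i j (LV4.v1.inj h4)).elim
  | type5ok j a' =>
      have h4 := congrArg (fun p : GV m n => p.2.2.2) hx
      simp at h4
  | type5no j a' =>
      have h4 := congrArg (fun p : GV m n => p.2.2.2) hx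
      simp at h4

lemma e1_var_inv {m n : ℕ} [NeZero n] {φ : CNF m n} {y : GV m n}
    {b : Bool} {j : Fin n}
    (h : E1 φ (tf b j, tf b j, tf b j, LV4.v1 (Fin.natAdd m j)) y) :
    y = tgt m n := by
  generalize hx : (tf b j, tf b j, tf b j,
      (LV4.v1 (Fin.natAdd m j) : LV4 m n)) = x at h
  cases h with
  | type1 i' => exact (tf_ne_S _ _ (congrArg Prod.fst hx)).elim
  | type2 j' => exact (tf_ne_S _ _ (congrArg Prod.fst hx)).elim
  | type3a i' a' ht' =>
      have h4 := congrArg (fun p : GV m n => p.2.2.2) hx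
      simp only [] at h4
      exact ((castAdd_ne_natAdd i' j) (LV4.v1.inj h4).symm).elim
  | type3b i' a' ht' =>
      have h4 := congrArg (fun p : GV m n => p.2.2.2) hx
      simp only [] at h4
      exact ((castAdd_ne_natAdd i' j) (LV4.v1.inj h4).symm).elim
  | type4a j' b' => rfl
  | type4b j' a' hm =>
      have h4 := congrArg (fun p : GV m n => p.2.2.2) hx
      simp only [] at h4
      have hjj : j = j' := by
        have := congrArg Fin.val (LV4.v1.inj h4)
        simp at this
        exact Fin.ext this
      subst hjj
      have e1 := tf_inj (congrArg (fun p : GV m n => p.1) hx)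
      have e2 := tf_inj (congrArg (fun p : GV m n => p.2.1) hx)
      have e3 := tf_inj (congrArg (fun p : GV m n => p.2.2.1) hx)
      exact (hm ⟨e1.symm.trans e2, e2.symm.trans e3⟩).elim
  | type5ok j' a' =>
      have h4 := congrArg (fun p : GV m n => p.2.2.2) hx
      simp at h4
  | type5no j' a' =>
      have h4 := congrArg (fun p : GV m n => p.2.2.2) hx
      simp at h4

/-- If `A` satisfies `φ`, then the positional distributed
strategy induced by `A` (for `i = 1,2,3`, `fᵢ(var_j) = T_j` if `A(var_j)` and
`F_j` otherwise; `f₄` maps `v_{j,0} ↦ v_{j,1}`, `OK₀ ↦ OK₁`, `NO₀ ↦ NO₁`) is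
reachability-winning from `(S,S,S,S)` to `(var₁,var₁,var₁,OK₀)`. -/
theorem induced_strategy_winning {m n : ℕ} [NeZero n] (φ : CNF m n)
    (A : Fin n → Bool) (hA : CNF.Sat φ A) (ξ : Strat m n)
    (hf1 : ∀ j : Fin n, ξ.f1 (.var j) = tf (A j) j)
    (hf2 : ∀ j : Fin n, ξ.f2 (.var j) = tf (A j) j)
    (hf3 : ∀ j : Fin n, ξ.f3 (.var j) = tf (A j) j)
    (hfv : ∀ j : Fin (m + n), ξ.f4 (.v0 j) = .v1 j)
    (hfok : ξ.f4 .OK0 = .OK1) (hfno : ξ.f4 .NO0 = .NO1) :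
    Winning φ ξ (start m n) (tgt m n) := by
  intro π hplay hcons h0
  -- `start` is a player-1 vertex with a successor
  have hP1start : (start m n).IsP1 := by
    refine ⟨?_, ?_, ?_, ?_⟩ <;> simp [start, LV.IsP0, LV4.IsP0]
  have hsucc0 : HasSucc φ (π 0) := by
    rw [h0]
    exact ⟨_, Or.inl ⟨hP1start, E1.type2 (0 : Fin n)⟩⟩
  have hge0 := (hplay 0).1 hsucc0
  rw [h0] at hge0
  have he1 : E1 φ (start m n) (π 1) := by
    rcases hge0 with ⟨_, h⟩ | ⟨hnp, _⟩
    · exact h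
    · exact absurd hP1start hnp
  rcases e1_start_inv he1 with ⟨i, hπ1⟩ | ⟨j, hπ1⟩
  · -- clause check
    have hnp1 : ¬ (π 1).IsP1 := by
      rw [hπ1]; intro hc; exact hc.1 trivial
    obtain ⟨c1h, c2h, c3h, c4h⟩ := hcons 1 hnp1
    rw [hπ1] at c1h c2h c3h c4h
    have hπ2 : π 2 = (tf (A (φ i).1.1) (φ i).1.1, tf (A (φ i).2.1.1) (φ i).2.1.1,
        tf (A (φ i).2.2.1) (φ i).2.2.1, LV4.v1 (Fin.castAdd n i)) := by
      have e : π 2 = ((π 2).1, (π 2).2.1, (π 2).2.2.1, (π 2).2.2.2) := rfl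
      rw [e, c1h trivial, c2h trivial, c3h trivial, c4h trivial,
        hf1, hf2, hf3, hfv]
    have hP1two : (π 2).IsP1 := by
      rw [hπ2]
      exact ⟨tf_not_P0 _ _, tf_not_P0 _ _, tf_not_P0 _ _, by simp [LV4.IsP0]⟩
    have hev : Clause.evalTriple (φ i)
        (A (φ i).1.1, A (φ i).2.1.1, A (φ i).2.2.1) = true := hA i
    have hsucc2 : HasSucc φ (π 2) := by
      refine ⟨tgt m n, Or.inl ⟨hP1two, ?_⟩⟩
      rw [hπ2]
      exact E1.type3a i (A (φ i).1.1, A (φ i).2.1.1, A (φ i).2.2.1) hev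
    have hge2 := (hplay 2).1 hsucc2
    have he2 : E1 φ (π 2) (π 3) := by
      rcases hge2 with ⟨_, h⟩ | ⟨hnp, _⟩
      · exact h
      · exact absurd hP1two hnp
    rw [hπ2] at he2
    exact ⟨3, e1_clause_inv he2 hev⟩
  · -- variable check
    have hnp1 : ¬ (π 1).IsP1 := by
      rw [hπ1]; intro hc; exact hc.1 trivial
    obtain ⟨c1h, c2h, c3h, c4h⟩ := hcons 1 hnp1
    rw [hπ1] at c1h c2h c3h c4h
    have hπ2 : π 2 = (tf (A j) j, tf (A j) j, tf (A j) j,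
        LV4.v1 (Fin.natAdd m j)) := by
      have e : π 2 = ((π 2).1, (π 2).2.1, (π 2).2.2.1, (π 2).2.2.2) := rfl
      rw [e, c1h trivial, c2h trivial, c3h trivial, c4h trivial,
        hf1, hf2, hf3, hfv]
    have hP1two : (π 2).IsP1 := by
      rw [hπ2]
      exact ⟨tf_not_P0 _ _, tf_not_P0 _ _, tf_not_P0 _ _, by simp [LV4.IsP0]⟩
    have hsucc2 : HasSucc φ (π 2) := by
      refine ⟨tgt m n, Or.inl ⟨hP1two, ?_⟩⟩
      rw [hπ2]
      exact E1.type4a j (A j)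
    have hge2 := (hplay 2).1 hsucc2
    have he2 : E1 φ (π 2) (π 3) := by
      rcases hge2 with ⟨_, h⟩ | ⟨hnp, _⟩
      · exact h
      · exact absurd hP1two hnp
    rw [hπ2] at he2
    exact ⟨3, e1_var_inv he2⟩

end DGame
end

section
/- Let φ be a 3CNF formula with clauses C₁,…,C_m over variables var₁,…,var_n, and suppose ξ=⟨f₁,f₂,f₃,f₄⟩ is a positional distributed strategy on 𝒢(φ) that is reachability-winning from (S,S,S,S) to (var₁,var₁,var₁,OK₀). Then the truth assignment A defined by A(var_j)=true if f₁(var_j)=T_{var_j} and A(var_j)=false if f₁(var_j)=F_{var_j} satisfies φ. -/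
namespace DGame

/-! If `ξ` fails a check that player 1 may open with (a clause made false by the three local
choices, or a variable on which the three local choices disagree), player 1 takes the edge to
`NO₀`, and from there the play cycles through `NO₀` and `NO₁` forever without reaching `OK₀`.
So a winning `ξ` makes `f₁, f₂, f₃` agree on every variable, and then the choices of `f₁` make
every clause true. -/

section

variable {m n : ℕ}

def moveLocal (f : LV n → LV n) : LV n → LV n
  | .var j => f (.var j)
  | v => v

def moveLocal4 (f : LV4 m n → LV4 m n) : LV4 m n → LV4 m n
  | .OK0 => f .OK0
  | .NO0 => f .NO0
  | .v0 j => f (.v0 j)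
  | v => v

def Strat.move (ξ : Strat m n) (x : GV m n) : GV m n :=
  (moveLocal ξ.f1 x.1, moveLocal ξ.f2 x.2.1, moveLocal ξ.f3 x.2.2.1, moveLocal4 ξ.f4 x.2.2.2)

lemma moveLocal_of_isP0 (f : LV n → LV n) {v : LV n} (hv : v.IsP0) : moveLocal f v = f v := by
  cases v <;> first | rfl | exact hv.elim

lemma moveLocal4_of_isP0 (f : LV4 m n → LV4 m n) {v : LV4 m n} (hv : v.IsP0) :
    moveLocal4 f v = f v := by
  cases v <;> first | rfl | exact hv.elim

lemma lstep_moveLocal {f : LV n → LV n} (hf : ∀ j, LE (.var j) (f (.var j))) (v : LV n) :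
    lstep v (moveLocal f v) := by
  cases v <;> first | exact hf _ | rfl

lemma lstep4_moveLocal4 {f : LV4 m n → LV4 m n} (hf : ∀ v, v.IsP0 → LE4 v (f v))
    (v : LV4 m n) : lstep4 v (moveLocal4 f v) := by
  cases v <;> first | exact hf _ trivial | rfl

lemma Strat.ge_move [NeZero n] (φ : CNF m n) (ξ : Strat m n) {x : GV m n} (hx : ¬ x.IsP1) :
    GE φ x (ξ.move x) :=
  Or.inr ⟨hx, lstep_moveLocal ξ.h1 _, lstep_moveLocal ξ.h2 _, lstep_moveLocal ξ.h3 _,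
    lstep4_moveLocal4 ξ.h4 _⟩

lemma Strat.consistent_of_move {ξ : Strat m n} {π : ℕ → GV m n}
    (hπ : ∀ k, ¬ (π k).IsP1 → π (k + 1) = ξ.move (π k)) : Consistent ξ π := by
  intro k hk
  rw [hπ k hk]
  exact ⟨moveLocal_of_isP0 _, moveLocal_of_isP0 _, moveLocal_of_isP0 _, moveLocal4_of_isP0 _⟩

lemma isPlay_of_forall_ge [NeZero n] {φ : CNF m n} {π : ℕ → GV m n}
    (hπ : ∀ k, GE φ (π k) (π (k + 1))) : IsPlay φ π :=
  fun k => ⟨fun _ => hπ k, fun hk => (hk ⟨_, hπ k⟩).elim⟩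

theorem not_winning_of_trap [NeZero n] {φ : CNF m n} {ξ : Strat m n} {init goal : GV m n}
    (trap : Set (GV m n)) (hinit : init ∈ trap) (hgoal : goal ∉ trap)
    (hP1 : ∀ x ∈ trap, x.IsP1 → ∃ y ∈ trap, E1 φ x y)
    (hP0 : ∀ x ∈ trap, ¬ x.IsP1 → ξ.move x ∈ trap) :
    ¬ Winning φ ξ init goal := by
  classical
  choose! τ hτ using hP1
  let step : GV m n → GV m n := fun x => if x.IsP1 then τ x else ξ.move x
  let π : ℕ → GV m n := fun k => step^[k] init
  have hsucc (k : ℕ) : π (k + 1) = step (π k) := Function.iterate_succ_apply' step k init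
  have hmem (k : ℕ) : π k ∈ trap := by
    induction k with
    | zero => exact hinit
    | succ k ih =>
      rw [hsucc]
      by_cases h : (π k).IsP1
      · simpa [step, h] using (hτ _ ih h).1
      · simpa [step, h] using hP0 _ ih h
  have hge (k : ℕ) : GE φ (π k) (π (k + 1)) := by
    rw [hsucc]
    by_cases h : (π k).IsP1
    · simp only [step, if_pos h]
      exact Or.inl ⟨h, (hτ _ (hmem k) h).2⟩
    · simp only [step, if_neg h]
      exact ξ.ge_move φ h
  have hcons : Consistent ξ π :=
    Strat.consistent_of_move fun k h => by rw [hsucc]; simp [step, h]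
  intro hwin
  obtain ⟨k, hk⟩ := hwin π (isPlay_of_forall_ge hge) hcons rfl
  exact hgoal (hk ▸ hmem k)

lemma LE.eq_tf {j : Fin n} {v : LV n} (h : LE (.var j) v) :
    v = tf (if v = LV.T j then true else false) j := by
  cases h <;> simp [tf]

lemma LE.not_isP0 {j : Fin n} {v : LV n} (h : LE (.var j) v) : ¬ v.IsP0 := by
  cases h <;> exact id

lemma Strat.f4_v0 (ξ : Strat m n) (ι : Fin (m + n)) : ξ.f4 (.v0 ι) = .v1 ι := by
  generalize hw : ξ.f4 (.v0 ι) = w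
  cases hw ▸ ξ.h4 (.v0 ι) trivial; rfl

lemma Strat.f4_NO0 (ξ : Strat m n) : ξ.f4 .NO0 = .NO1 := by
  generalize hw : ξ.f4 .NO0 = w
  cases hw ▸ ξ.h4 .NO0 trivial; rfl

theorem not_winning_of_refuted_check [NeZero n] {φ : CNF m n} {ξ : Strat m n}
    (a b c : Fin n) (ι : Fin (m + n))
    (hcheck : E1 φ (start m n) (.var a, .var b, .var c, .v0 ι))
    (hrefute : E1 φ (ξ.f1 (.var a), ξ.f2 (.var b), ξ.f3 (.var c), .v1 ι) (sink m n)) :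
    ¬ Winning φ ξ (start m n) (tgt m n) := by
  set answer : GV m n := (ξ.f1 (.var a), ξ.f2 (.var b), ξ.f3 (.var c), .v1 ι)
  set loop : GV m n := (ξ.f1 (.var 0), ξ.f2 (.var 0), ξ.f3 (.var 0), .NO1)
  have hanswer : answer.IsP1 :=
    ⟨(ξ.h1 a).not_isP0, (ξ.h2 b).not_isP0, (ξ.h3 c).not_isP0, id⟩
  have hloop : loop.IsP1 :=
    ⟨(ξ.h1 0).not_isP0, (ξ.h2 0).not_isP0, (ξ.h3 0).not_isP0, id⟩
  have hloop_sink : E1 φ loop (sink m n) := by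
    simp only [loop]
    rw [(ξ.h1 0).eq_tf, (ξ.h2 0).eq_tf, (ξ.h3 0).eq_tf]
    exact E1.type5no 0 (_, _, _)
  refine not_winning_of_trap {start m n, (.var a, .var b, .var c, .v0 ι), answer, sink m n, loop}
    (by simp) (by simp [tgt, start, sink, answer, loop]) ?_ ?_
  · rintro x hx hx1
    simp only [Set.mem_insert_iff, Set.mem_singleton_iff] at hx
    rcases hx with rfl | rfl | rfl | rfl | rfl
    · exact ⟨_, by simp, hcheck⟩
    · exact (hx1.1 trivial).elim
    · exact ⟨_, by simp, hrefute⟩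
    · exact (hx1.1 trivial).elim
    · exact ⟨_, by simp, hloop_sink⟩
  · rintro x hx hx0
    simp only [Set.mem_insert_iff, Set.mem_singleton_iff] at hx
    rcases hx with rfl | rfl | rfl | rfl | rfl
    · exact (hx0 ⟨id, id, id, id⟩).elim
    · simp [Strat.move, moveLocal, moveLocal4, Strat.f4_v0, answer]
    · exact (hx0 hanswer).elim
    · simp [Strat.move, moveLocal, moveLocal4, Strat.f4_NO0, sink, loop]
    · exact (hx0 hloop).elim

theorem Winning.f2_eq_f1_and_f3_eq_f1 [NeZero n] {φ : CNF m n} {ξ : Strat m n}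
    (hwin : Winning φ ξ (start m n) (tgt m n)) (j : Fin n) :
    ξ.f2 (.var j) = ξ.f1 (.var j) ∧ ξ.f3 (.var j) = ξ.f1 (.var j) := by
  rw [(ξ.h1 j).eq_tf, (ξ.h2 j).eq_tf, (ξ.h3 j).eq_tf]
  set b₁ := if ξ.f1 (.var j) = LV.T j then true else false
  set b₂ := if ξ.f2 (.var j) = LV.T j then true else false
  set b₃ := if ξ.f3 (.var j) = LV.T j then true else false
  by_cases hagree : b₁ = b₂ ∧ b₂ = b₃
  · rw [hagree.1, hagree.2]
    exact ⟨rfl, rfl⟩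
  · refine (not_winning_of_refuted_check j j j (Fin.natAdd m j) (E1.type2 j) ?_ hwin).elim
    rw [(ξ.h1 j).eq_tf, (ξ.h2 j).eq_tf, (ξ.h3 j).eq_tf]
    exact E1.type4b j (b₁, b₂, b₃) hagree

end

/-- If `ξ = ⟨f₁,f₂,f₃,f₄⟩` is a positional distributed
strategy on `𝒢(φ)` which is reachability-winning from `(S,S,S,S)` to
`(var₁,var₁,var₁,OK₀)`, then the assignment `A(var_j) = true` iff
`f₁(var_j) = T_j` (and `false` if `f₁(var_j) = F_j`) satisfies `φ`. -/
theorem winning_strategy_yields_satisfying_assignment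
    {m n : ℕ} [NeZero n] (φ : CNF m n) (ξ : Strat m n)
    (hwin : Winning φ ξ (start m n) (tgt m n)) :
    CNF.Sat φ (fun j => if ξ.f1 (.var j) = LV.T j then true else false) := by
  set A : Fin n → Bool := fun j => if ξ.f1 (.var j) = LV.T j then true else false
  have hf1 (j : Fin n) : ξ.f1 (.var j) = tf (A j) j := (ξ.h1 j).eq_tf
  have hf2 (j : Fin n) : ξ.f2 (.var j) = tf (A j) j :=
    (hwin.f2_eq_f1_and_f3_eq_f1 j).1.trans (hf1 j)
  have hf3 (j : Fin n) : ξ.f3 (.var j) = tf (A j) j :=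
    (hwin.f2_eq_f1_and_f3_eq_f1 j).2.trans (hf1 j)
  intro i
  by_contra hunsat
  refine not_winning_of_refuted_check _ _ _ (i.castAdd n) (E1.type1 i) ?_ hwin
  rw [hf1, hf2, hf3]
  exact E1.type3b i (A _, A _, A _) (by simpa [Clause.eval, Clause.evalTriple] using hunsat)

end DGame
end
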